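/- arXiv:1512.06765 — 3 statements merged into one kernel-verified Lean document; each statement's English description precedes it below -/
import Mathlib

section
/- Let g ≥ 1 be an integer, let e_1, …, e_{2g+2} be complex numbers, and let f(x) = ∏_{m=1}^{2g+2} (x − e_m). For every x ∈ ℂ with f(x) ≠ 0, the sum over all (g+1)-element subsets S of {1, …, 2g+2} satisfies ∑_S ( 2 ∑_{i∈S} 1/(x − e_i) − f′(x)/f(x) )² = 2 C(2g+1, g) · ( (2g+1) f′(x)² − 2(g+1) f(x) f″(x) ) / ( (2g+1) f(x)² ). -/
/-!
Put `u i = (x - e i)⁻¹`, `B = ∑ u i` and `A = ∑ u i ^ 2`. The product rule gives `f' = f B` and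
`f'' = f (B² - A)`. Expanding `(2 ∑_{i ∈ S} u i - B)²` and counting how many `(g + 1)`-subsets
contain a given index (`C(2g+1, g)`) or a given pair of indices (`C(2g, g-1)`) turns the left side
into `4 C(2g+1, g) A + 4 C(2g, g-1) (B² - A) - 4 C(2g+1, g) B² + C(2g+2, g+1) B²`; the identities
`C(2g+2, g+1) = 2 C(2g+1, g)` and `(2g+1) C(2g, g-1) = g C(2g+1, g)` make this the right side.
-/

open Finset

namespace Finset

variable {ι α M : Type*} [DecidableEq α] [AddCommMonoid M]

theorem sum_sum_eq_sum_card_filter_nsmul (𝒜 : Finset ι) (T : ι → Finset α) (s : Finset α)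
    (hT : ∀ S ∈ 𝒜, T S ⊆ s) (v : α → M) :
    ∑ S ∈ 𝒜, ∑ a ∈ T S, v a = ∑ a ∈ s, #{S ∈ 𝒜 | a ∈ T S} • v a := by
  rw [sum_comm' (t' := s) (s' := fun a => {S ∈ 𝒜 | a ∈ T S})]
  · simp only [sum_const]
  · intro S a
    simp only [mem_filter]
    exact ⟨fun ⟨hS, ha⟩ => ⟨⟨hS, ha⟩, hT S hS ha⟩, fun ⟨⟨hS, ha⟩, _⟩ => ⟨hS, ha⟩⟩

theorem sum_powersetCard_sum (s : Finset α) {k : ℕ} (hk : 1 ≤ k) (v : α → M) :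
    ∑ S ∈ s.powersetCard k, ∑ a ∈ S, v a = (#s - 1).choose (k - 1) • ∑ a ∈ s, v a := by
  rw [sum_sum_eq_sum_card_filter_nsmul _ (fun S => S) s (fun S hS => (mem_powersetCard.1 hS).1),
    smul_sum]
  refine sum_congr rfl fun a ha => ?_
  have hcount := card_filter_powersetCard_subset {a} s k (singleton_subset_iff.2 ha)
    (by rwa [card_singleton])
  simp only [singleton_subset_iff, card_singleton] at hcount
  rw [hcount]

theorem sum_powersetCard_sum_sq {R : Type*} [CommRing R] (s : Finset α) {k : ℕ} (hk : 2 ≤ k)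
    (v : α → R) :
    ∑ S ∈ s.powersetCard k, (∑ a ∈ S, v a) ^ 2
      = (#s - 1).choose (k - 1) • ∑ a ∈ s, v a ^ 2
        + (#s - 2).choose (k - 2) • ((∑ a ∈ s, v a) ^ 2 - ∑ a ∈ s, v a ^ 2) := by
  have hsq (t : Finset α) : (∑ a ∈ t, v a) ^ 2 = ∑ p ∈ t ×ˢ t, v p.1 * v p.2 := by
    rw [sq, sum_mul_sum, sum_product]
  have hdiag : ∑ p ∈ s.diag, v p.1 * v p.2 = ∑ a ∈ s, v a ^ 2 := by
    simp only [sum_diag, sq]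
  have hoffDiag : ∑ p ∈ s.offDiag, v p.1 * v p.2 = (∑ a ∈ s, v a) ^ 2 - ∑ a ∈ s, v a ^ 2 := by
    rw [hsq, ← diag_union_offDiag, sum_union (disjoint_diag_offDiag s), hdiag, add_sub_cancel_left]
  have hcount : ∀ p ∈ s ×ˢ s,
      #{S ∈ s.powersetCard k | p ∈ S ×ˢ S} = (#s - #{p.1, p.2}).choose (k - #{p.1, p.2}) := by
    intro p hp
    rw [mem_product] at hp
    rw [← card_filter_powersetCard_subset _ _ _ (insert_subset hp.1 (singleton_subset_iff.2 hp.2))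
      (card_le_two.trans hk)]
    congr 1
    refine filter_congr fun S _ => ?_
    rw [mem_product, insert_subset_iff, singleton_subset_iff]
  rw [← hoffDiag, ← hdiag]
  simp only [hsq]
  rw [sum_sum_eq_sum_card_filter_nsmul _ (fun S => S ×ˢ S) (s ×ˢ s)
      (fun S hS => product_subset_product (mem_powersetCard.1 hS).1 (mem_powersetCard.1 hS).1),
    ← diag_union_offDiag, sum_union (disjoint_diag_offDiag s), smul_sum, smul_sum]
  congr 1
  · refine sum_congr rfl fun p hp => ?_
    obtain ⟨hp1, hp12⟩ := mem_diag.1 hp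
    rw [hcount p (mem_product.2 ⟨hp1, hp12 ▸ hp1⟩), hp12, pair_eq_singleton, card_singleton]
  · refine sum_congr rfl fun p hp => ?_
    obtain ⟨hp1, hp2, hp12⟩ := mem_offDiag.1 hp
    rw [hcount p (mem_product.2 ⟨hp1, hp2⟩), card_pair hp12]

theorem prod_erase_eq_mul_inv {G₀ : Type*} [CommGroupWithZero G₀] {s : Finset α} {f : α → G₀}
    {a : α} (ha : a ∈ s) (hfa : f a ≠ 0) : ∏ b ∈ s.erase a, f b = (∏ b ∈ s, f b) * (f a)⁻¹ :=
  (eq_mul_inv_iff_mul_eq₀ hfa).2 (prod_erase_mul _ _ ha)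

end Finset

namespace Nat

theorem choose_two_mul_add_two_eq_two_mul_choose (g : ℕ) :
    (2 * g + 2).choose (g + 1) = 2 * (2 * g + 1).choose g := by
  rw [choose_succ_succ', choose_symm_half, ← two_mul]

theorem two_mul_add_one_mul_choose_sub_one {g : ℕ} (hg : 1 ≤ g) :
    (2 * g + 1) * (2 * g).choose (g - 1) = g * (2 * g + 1).choose g := by
  obtain ⟨k, rfl⟩ : ∃ k, g = k + 1 := ⟨g - 1, by omega⟩
  rw [Nat.add_sub_cancel, add_one_mul_choose_eq, mul_comm]

end Nat

section ProdSub

variable {ι 𝕜 : Type*} [DecidableEq ι] [NontriviallyNormedField 𝕜] {t : Finset ι} {e : ι → 𝕜}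
  {x : 𝕜}

theorem deriv_prod_sub (t : Finset ι) (e : ι → 𝕜) :
    deriv (fun z => ∏ m ∈ t, (z - e m)) = fun z => ∑ i ∈ t, ∏ m ∈ t.erase i, (z - e m) := by
  funext z
  simpa using (HasDerivAt.fun_finsetProd (u := t) (f := fun m z => z - e m) (f' := fun _ => 1)
    fun m _ => (hasDerivAt_id z).sub_const (e m)).deriv

theorem deriv_prod_sub_eq_mul_sum_inv (hx : ∏ m ∈ t, (x - e m) ≠ 0) :
    deriv (fun z => ∏ m ∈ t, (z - e m)) x = (∏ m ∈ t, (x - e m)) * ∑ m ∈ t, (x - e m)⁻¹ := by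
  rw [deriv_prod_sub, mul_sum]
  exact sum_congr rfl fun i hi => prod_erase_eq_mul_inv hi (prod_ne_zero_iff.1 hx i hi)

theorem deriv_deriv_prod_sub_eq (hx : ∏ m ∈ t, (x - e m) ≠ 0) :
    deriv (deriv (fun z => ∏ m ∈ t, (z - e m))) x
      = (∏ m ∈ t, (x - e m)) * ((∑ m ∈ t, (x - e m)⁻¹) ^ 2 - ∑ m ∈ t, (x - e m)⁻¹ ^ 2) := by
  have hderiv_erase : ∀ i ∈ t, deriv (fun z => ∏ m ∈ t.erase i, (z - e m)) x
      = (∏ m ∈ t, (x - e m)) * ((x - e i)⁻¹ * ∑ m ∈ t, (x - e m)⁻¹ - (x - e i)⁻¹ ^ 2) := by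
    intro i hi
    have hx' : ∏ m ∈ t.erase i, (x - e m) ≠ 0 :=
      prod_ne_zero_iff.2 fun m hm => prod_ne_zero_iff.1 hx m (mem_of_mem_erase hm)
    rw [deriv_prod_sub_eq_mul_sum_inv hx', prod_erase_eq_mul_inv hi (prod_ne_zero_iff.1 hx i hi),
      ← add_sum_erase t _ hi]
    ring
  rw [deriv_prod_sub, deriv_fun_sum fun i _ => by fun_prop, sum_congr rfl hderiv_erase, ← mul_sum,
    sum_sub_distrib, ← sum_mul, sq (∑ m ∈ t, _)]

end ProdSub

/-- For `f(x) = ∏_{m=1}^{2g+2} (x - e_m)` and `f x ≠ 0`, the sum over all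
`(g+1)`-element subsets `S` of `(2 ∑_{i ∈ S} 1/(x - e_i) - f'(x)/f(x))²` equals
`2 C(2g+1, g) · ((2g+1) f'(x)² − 2(g+1) f(x) f''(x)) / ((2g+1) f(x)²)`. -/
theorem sum_over_subsets_of_log_derivative_sq
    (g : ℕ) (hg : 1 ≤ g) (e : Fin (2 * g + 2) → ℂ)
    (f : ℂ → ℂ) (hf : f = fun x => ∏ m, (x - e m))
    (x : ℂ) (hx : f x ≠ 0) :
    ∑ S ∈ Finset.powersetCard (g + 1) (Finset.univ : Finset (Fin (2 * g + 2))),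
        (2 * ∑ i ∈ S, 1 / (x - e i) - deriv f x / f x) ^ 2
      = 2 * (Nat.choose (2 * g + 1) g : ℂ) *
          ((2 * (g : ℂ) + 1) * (deriv f x) ^ 2 - 2 * ((g : ℂ) + 1) * f x * deriv (deriv f) x) /
          ((2 * (g : ℂ) + 1) * (f x) ^ 2) := by
  subst hf
  beta_reduce at hx ⊢
  have hsum := sum_powersetCard_sum univ (k := g + 1) (by omega) fun m => (x - e m)⁻¹
  have hsq := sum_powersetCard_sum_sq univ (k := g + 1) (by omega) fun m => (x - e m)⁻¹
  have hcentral := congrArg (Nat.cast (R := ℂ)) (Nat.choose_two_mul_add_two_eq_two_mul_choose g)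
  have hpairs := congrArg (Nat.cast (R := ℂ)) (Nat.two_mul_add_one_mul_choose_sub_one hg)
  push_cast at hcentral hpairs
  have hsize : 2 * g + 2 - 1 = 2 * g + 1 := rfl
  have hpair : g + 1 - 2 = g - 1 := rfl
  rw [deriv_deriv_prod_sub_eq hx, deriv_prod_sub_eq_mul_sum_inv hx, mul_div_cancel_left₀ _ hx,
    eq_div_iff (mul_ne_zero (by norm_cast) (pow_ne_zero 2 hx))]
  simp only [one_div, sub_sq, mul_pow, sum_add_distrib, sum_sub_distrib, ← mul_sum, ← sum_mul,
    sum_const, card_powersetCard, card_univ, Fintype.card_fin, nsmul_eq_mul, hsum, hsq, hsize,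
    hpair, Nat.add_sub_cancel]
  set F := ∏ m, (x - e m)
  set B := ∑ m, (x - e m)⁻¹
  set A := ∑ m, (x - e m)⁻¹ ^ 2
  linear_combination (2 * (g : ℂ) + 1) * F ^ 2 * B ^ 2 * hcentral + 4 * F ^ 2 * (B ^ 2 - A) * hpairs
end

section
/- Let g ≥ 1 be an integer, let e_1, …, e_{2g+2} be complex numbers, let f(x) = ∏_{m=1}^{2g+2} (x − e_m) = ∑_{k=0}^{2g+2} λ_k x^k, let N_g = C(2g+1, g), and let R(x) = ∑_{i=1}^{g} ∑_{k=i}^{2g+1−i} (k+1−i) λ_{k+1+i} x^{k+i−1}. Then for every x ∈ ℂ with f(x) ≠ 0: N_g · (2 f(x) f″(x) − f′(x)²)/(4 f(x)) − N_g · R(x) + (f(x)/8) · ∑_S ( 2 ∑_{i∈S} 1/(x − e_i) − f′(x)/f(x) )² = (N_g/(4g+2)) · ∑_{k=2}^{2g} ( k(2g+2−k)/2 + ((2g+1)/4)((−1)^k − 1) ) λ_k x^{k−2}, where ∑_S ranges over all (g+1)-element subsets S of {1, …, 2g+2}. -/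
/-!
Write `s_m = (x - e_m)⁻¹`, `T = ∑ s_m` and `Q = ∑ s_m²`. Logarithmic differentiation of
`f = ∏ (x - e_m)` gives `f' = f T` and `f'' = f (T² - Q)`. Counting the `(g+1)`-subsets that
contain one, resp. two, given indices gives
`(2g+1) ∑_S (2 ∑_{i∈S} s_i - T)² = 2 N_g (2(g+1) Q - T²)`, and substituting both, the left side
collapses to `N_g (g f'' / (4g+2) - R)`. Writing `f''` and `R` in the coefficients `λ_n`, the
coefficient of `λ_n x^(n-2)` is then settled by the parity-free closed form
`8 ∑_{1 ≤ i ≤ (n-1)/2} (n - 2i) = 2(n-1)² - 1 - (-1)ⁿ`.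
-/

open Finset

section PowersetCardSums

variable {α R : Type*} [DecidableEq α] [Fintype α] [CommRing R]

theorem sum_sum_mem_comm {M : Type*} [AddCommMonoid M] (𝒜 : Finset (Finset α))
    (G : Finset α → α → M) :
    ∑ S ∈ 𝒜, ∑ i ∈ S, G S i = ∑ i, ∑ S ∈ 𝒜 with i ∈ S, G S i := by
  simp_rw [sum_filter]
  rw [sum_comm]
  refine sum_congr rfl fun S _ => ?_
  rw [← sum_filter, filter_mem_eq_inter, univ_inter]

theorem card_filter_mem_powersetCard_univ {r : ℕ} (hr : 1 ≤ r) (i : α) :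
    #{S ∈ univ.powersetCard r | i ∈ S} = (Fintype.card α - 1).choose (r - 1) := by
  simpa using card_filter_powersetCard_subset {i} univ r (subset_univ _) (by simpa using hr)

theorem card_filter_mem_and_mem_powersetCard_univ {r : ℕ} (hr : 2 ≤ r) {i j : α} (hij : i ≠ j) :
    #{S ∈ univ.powersetCard r | i ∈ S ∧ j ∈ S} = (Fintype.card α - 2).choose (r - 2) := by
  have h := card_filter_powersetCard_subset {i, j} univ r (subset_univ _)
    (by rw [card_pair hij]; exact hr)
  simpa [card_pair hij, insert_subset_iff] using h

theorem sum_powersetCard_sum {r : ℕ} (hr : 1 ≤ r) (F : α → R) :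
    ∑ S ∈ univ.powersetCard r, ∑ i ∈ S, F i
      = (Fintype.card α - 1).choose (r - 1) * ∑ i, F i := by
  rw [sum_sum_mem_comm, mul_sum]
  refine sum_congr rfl fun i _ => ?_
  rw [sum_const, card_filter_mem_powersetCard_univ hr, nsmul_eq_mul]

theorem sum_powersetCard_sum_sq {r : ℕ} (hr : 2 ≤ r) (F : α → R) :
    ∑ S ∈ univ.powersetCard r, (∑ i ∈ S, F i) ^ 2
      = (Fintype.card α - 2).choose (r - 2) * (∑ i, F i) ^ 2
        + (((Fintype.card α - 1).choose (r - 1) : R) - (Fintype.card α - 2).choose (r - 2))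
          * ∑ i, F i ^ 2 := by
  set C₁ : R := (((Fintype.card α - 1).choose (r - 1) : ℕ) : R)
  set C₂ : R := (((Fintype.card α - 2).choose (r - 2) : ℕ) : R)
  have hpair : ∀ i j, ∑ S ∈ univ.powersetCard r with i ∈ S ∧ j ∈ S, F i * F j
      = (C₂ + if i = j then C₁ - C₂ else 0) * (F i * F j) := by
    intro i j
    rw [sum_const, nsmul_eq_mul]
    by_cases hij : i = j
    · subst hij
      simp only [and_self, card_filter_mem_powersetCard_univ (by omega : 1 ≤ r), if_true, C₁]
      ring
    · rw [card_filter_mem_and_mem_powersetCard_univ hr hij, if_neg hij, add_zero]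
  calc ∑ S ∈ univ.powersetCard r, (∑ i ∈ S, F i) ^ 2
      = ∑ S ∈ univ.powersetCard r, ∑ i ∈ S, ∑ j ∈ S, F i * F j := by
        simp_rw [sq, sum_mul_sum]
    _ = ∑ i, ∑ j, ∑ S ∈ univ.powersetCard r with i ∈ S ∧ j ∈ S, F i * F j := by
        rw [sum_sum_mem_comm]
        refine sum_congr rfl fun i _ => ?_
        rw [sum_sum_mem_comm]
        simp_rw [filter_filter]
    _ = ∑ i, ∑ j, (C₂ * (F i * F j) + if i = j then (C₁ - C₂) * F i ^ 2 else 0) := by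
        refine sum_congr rfl fun i _ => sum_congr rfl fun j _ => ?_
        rw [hpair]
        split_ifs with hij
        · subst hij; ring
        · ring
    _ = C₂ * (∑ i, F i) ^ 2 + (C₁ - C₂) * ∑ i, F i ^ 2 := by
        rw [sq (∑ i, F i), sum_mul_sum]
        simp only [sum_add_distrib, sum_ite_eq, mem_univ, if_true, mul_sum, sq]

theorem mul_sum_powersetCard_two_mul_sum_sub_sum_sq {g : ℕ} (hg : 1 ≤ g)
    (hα : Fintype.card α = 2 * g + 2) (F : α → R) :
    (2 * g + 1) * ∑ S ∈ univ.powersetCard (g + 1), (2 * ∑ i ∈ S, F i - ∑ i, F i) ^ 2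
      = 2 * (2 * g + 1).choose g * (2 * (g + 1) * ∑ i, F i ^ 2 - (∑ i, F i) ^ 2) := by
  obtain ⟨q, rfl⟩ : ∃ q, g = q + 1 := ⟨g - 1, by omega⟩
  set A : Finset α → R := fun S => ∑ i ∈ S, F i
  have hsum := sum_powersetCard_sum (R := R) (by omega : 1 ≤ q + 1 + 1) F
  have hsq := sum_powersetCard_sum_sq (R := R) (by omega : 2 ≤ q + 1 + 1) F
  have hcount := card_powersetCard (q + 1 + 1) (univ : Finset α)
  have hmiddle :
      (2 * (q + 1) + 2).choose (q + 1 + 1) = 2 * (2 * (q + 1) + 1).choose (q + 1) := by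
    rw [Nat.choose_succ_succ', Nat.choose_symm_half]
    ring
  have hC₂ := congrArg (Nat.cast (R := R)) (Nat.add_one_mul_choose_eq (2 * q + 2) q)
  rw [card_univ, hα, hmiddle] at hcount
  rw [hα] at hsum hsq
  simp only [show 2 * (q + 1) + 2 - 1 = 2 * (q + 1) + 1 by omega,
    show 2 * (q + 1) + 2 - 2 = 2 * q + 2 by omega, show q + 1 + 1 - 2 = q by omega,
    Nat.add_sub_cancel] at hsum hsq
  simp only [show 2 * q + 2 + 1 = 2 * (q + 1) + 1 by omega] at hC₂
  push_cast at hC₂ ⊢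
  calc (2 * ((q : R) + 1) + 1) * ∑ S ∈ univ.powersetCard (q + 1 + 1), (2 * A S - ∑ i, F i) ^ 2
      = (2 * ((q : R) + 1) + 1) * (4 * ∑ S ∈ univ.powersetCard (q + 1 + 1), A S ^ 2
          - 4 * (∑ i, F i) * ∑ S ∈ univ.powersetCard (q + 1 + 1), A S
          + #(univ.powersetCard (q + 1 + 1)) * (∑ i, F i) ^ 2) := by
        have hexpand : ∀ S, (2 * A S - ∑ i, F i) ^ 2
            = 4 * A S ^ 2 - 4 * (∑ i, F i) * A S + (∑ i, F i) ^ 2 := fun S => by ring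
        simp only [hexpand, sum_add_distrib, sum_sub_distrib, ← mul_sum, sum_const, nsmul_eq_mul]
        ring
    _ = _ := by
        rw [hsum, hsq, hcount]
        push_cast
        linear_combination 4 * ((∑ i, F i) ^ 2 - ∑ i, F i ^ 2) * hC₂

end PowersetCardSums

section ProdSubDeriv

variable {𝕜 ι : Type*} [NontriviallyNormedField 𝕜] [DecidableEq ι] (e : ι → 𝕜)

theorem hasDerivAt_prod_sub (s : Finset ι) (x : 𝕜) :
    HasDerivAt (fun y => ∏ m ∈ s, (y - e m)) (∑ i ∈ s, ∏ m ∈ s.erase i, (x - e m)) x := by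
  simpa using HasDerivAt.fun_finsetProd (u := s) (f' := fun _ => (1 : 𝕜))
    fun i _ => (hasDerivAt_id x).sub_const (e i)

variable {s : Finset ι} {x : 𝕜}

theorem prod_erase_sub_eq (hx : ∀ m ∈ s, x ≠ e m) {i : ι} (hi : i ∈ s) :
    ∏ m ∈ s.erase i, (x - e m) = (∏ m ∈ s, (x - e m)) * (x - e i)⁻¹ := by
  rw [← mul_prod_erase s _ hi, mul_comm (x - e i), mul_assoc,
    mul_inv_cancel₀ (sub_ne_zero.mpr (hx i hi)), mul_one]

theorem sum_prod_erase_sub_eq (hx : ∀ m ∈ s, x ≠ e m) :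
    ∑ i ∈ s, ∏ m ∈ s.erase i, (x - e m) = (∏ m ∈ s, (x - e m)) * ∑ m ∈ s, (x - e m)⁻¹ := by
  rw [mul_sum]
  exact sum_congr rfl fun i hi => prod_erase_sub_eq e hx hi

theorem deriv_prod_sub_s4 (hx : ∀ m ∈ s, x ≠ e m) :
    deriv (fun y => ∏ m ∈ s, (y - e m)) x
      = (∏ m ∈ s, (x - e m)) * ∑ m ∈ s, (x - e m)⁻¹ := by
  rw [(hasDerivAt_prod_sub e s x).deriv, sum_prod_erase_sub_eq e hx]

theorem deriv_deriv_prod_sub (hx : ∀ m ∈ s, x ≠ e m) :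
    deriv (deriv fun y => ∏ m ∈ s, (y - e m)) x
      = (∏ m ∈ s, (x - e m)) * ((∑ m ∈ s, (x - e m)⁻¹) ^ 2 - ∑ m ∈ s, (x - e m)⁻¹ ^ 2) := by
  have hderiv : deriv (fun y => ∏ m ∈ s, (y - e m))
      = fun y => ∑ i ∈ s, ∏ m ∈ s.erase i, (y - e m) :=
    funext fun y => (hasDerivAt_prod_sub e s y).deriv
  have hsecond := HasDerivAt.fun_sum fun i (_ : i ∈ s) => hasDerivAt_prod_sub e (s.erase i) x
  rw [hderiv, hsecond.deriv]
  calc ∑ i ∈ s, ∑ j ∈ s.erase i, ∏ m ∈ (s.erase i).erase j, (x - e m)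
      = ∑ i ∈ s, (∏ m ∈ s, (x - e m)) * (x - e i)⁻¹ * ∑ j ∈ s.erase i, (x - e j)⁻¹ :=
        sum_congr rfl fun i hi => by
          rw [sum_prod_erase_sub_eq e fun m hm => hx m (mem_of_mem_erase hm),
            prod_erase_sub_eq e hx hi]
    _ = ∑ i ∈ s, (∏ m ∈ s, (x - e m)) * (x - e i)⁻¹ * (∑ j ∈ s, (x - e j)⁻¹ - (x - e i)⁻¹) :=
        sum_congr rfl fun i hi => by rw [sum_erase_eq_sub hi]
    _ = ∑ i ∈ s, (∏ m ∈ s, (x - e m)) * ((∑ j ∈ s, (x - e j)⁻¹) * (x - e i)⁻¹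
          - (x - e i)⁻¹ ^ 2) := sum_congr rfl fun i _ => by ring
    _ = _ := by rw [← mul_sum, sum_sub_distrib, ← mul_sum, sq]

end ProdSubDeriv

theorem deriv_deriv_sum_pow {𝕜 : Type*} [NontriviallyNormedField 𝕜] (a : ℕ → 𝕜) (n : ℕ)
    (x : 𝕜) :
    deriv (deriv fun y => ∑ k ∈ range n, a k * y ^ k) x
      = ∑ k ∈ range n, a k * (k * (k - 1)) * x ^ (k - 2) := by
  have hderiv : deriv (fun y => ∑ k ∈ range n, a k * y ^ k)
      = fun y => ∑ k ∈ range n, a k * k * y ^ (k - 1) :=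
    funext fun y => (HasDerivAt.fun_sum fun k _ =>
      ((hasDerivAt_pow k y).const_mul (a k)).congr_deriv (by ring)).deriv
  rw [hderiv]
  refine (HasDerivAt.fun_sum fun k _ =>
    ((hasDerivAt_pow (k - 1) x).const_mul (a k * k)).congr_deriv ?_).deriv
  rcases k with _ | k
  · simp
  · simp only [Nat.cast_add, Nat.cast_one, add_tsub_cancel_right, add_sub_cancel_right,
      Nat.reduceSubDiff]
    ring

theorem eight_mul_sum_Icc_sub_two_mul {R : Type*} [CommRing R] (n : ℕ) :
    8 * ∑ i ∈ Icc 1 ((n - 1) / 2), ((n : R) - 2 * i)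
      = 2 * ((n : R) - 1) ^ 2 - 1 - (-1) ^ n := by
  induction n using Nat.twoStepInduction with
  | zero => norm_num
  | one => norm_num
  | more n ih _ =>
    rcases n with _ | n
    · norm_num
    set m := (n + 1 - 1) / 2
    have hshift : ∑ i ∈ Icc 1 m, ((↑(n + 1 + 2) : R) - 2 * i)
        = ∑ i ∈ Icc 1 m, ((↑(n + 1) : R) - 2 * i) + m * 2 := by
      simp only [show ∀ i : ℕ, ((↑(n + 1 + 2) : R) - 2 * i) = (↑(n + 1) - 2 * i) + 2 from
        fun i => by push_cast; ring]
      simp [sum_add_distrib]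
    rw [show (n + 1 + 2 - 1) / 2 = m + 1 by omega, sum_Icc_succ_top (by omega), hshift]
    push_cast at ih ⊢
    linear_combination ih

theorem antidiagonal_coeff_identity {K : Type*} [Field K] [CharZero K] (g k : ℕ) :
    (g : K) * (k * (k - 1)) - (4 * g + 2) * ∑ i ∈ Icc 1 ((k - 1) / 2), ((k : K) - 2 * i)
      = k * (2 * g + 2 - k) / 2 + (2 * g + 1) / 4 * ((-1) ^ k - 1) := by
  linear_combination (-(4 * (g : K) + 2) / 8) * eight_mul_sum_Icc_sub_two_mul (R := K) k

theorem sum_residual_reindex {R : Type*} [CommRing R] (g : ℕ) (lam : ℕ → R) (x : R) :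
    ∑ i ∈ Icc 1 g, ∑ k ∈ Icc i (2 * g + 1 - i),
        ((k : R) + 1 - i) * lam (k + 1 + i) * x ^ (k + i - 1)
      = ∑ n ∈ range (2 * g + 3),
          (∑ i ∈ Icc 1 ((n - 1) / 2), ((n : R) - 2 * i)) * lam n * x ^ (n - 2) := by
  simp_rw [sum_mul]
  rw [sum_sigma', sum_sigma']
  refine sum_nbij' (fun p => ⟨p.2 + 1 + p.1, p.1⟩) (fun p => ⟨p.2, p.1 - 1 - p.2⟩)
    ?_ ?_ ?_ ?_ ?_ <;>
    simp only [mem_sigma, mem_Icc, mem_range, Sigma.mk.injEq, heq_eq_eq, Sigma.forall, true_and,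
      and_true]
  · intro i k h; omega
  · intro n i h; omega
  · intro i k h; omega
  · intro n i h; omega
  · intro i k h
    rw [show k + 1 + i - 2 = k + i - 1 by omega]
    push_cast
    ring

theorem antidiagonal_sum_identity {K : Type*} [Field K] [CharZero K] (g : ℕ) (lam : ℕ → K)
    (x : K) :
    (g : K) * ∑ k ∈ range (2 * g + 3), lam k * (k * (k - 1)) * x ^ (k - 2)
      - (4 * g + 2) * ∑ i ∈ Icc 1 g, ∑ k ∈ Icc i (2 * g + 1 - i),
          ((k : K) + 1 - i) * lam (k + 1 + i) * x ^ (k + i - 1)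
      = ∑ k ∈ Icc 2 (2 * g),
          ((k : K) * (2 * g + 2 - k) / 2 + (2 * g + 1) / 4 * ((-1) ^ k - 1)) * lam k
            * x ^ (k - 2) := by
  have hweight : ∀ k ∈ range (2 * g + 3), k ∉ Icc 2 (2 * g) →
      ((k : K) * (2 * g + 2 - k) / 2 + (2 * g + 1) / 4 * ((-1) ^ k - 1)) * lam k * x ^ (k - 2)
        = 0 := by
    intro k hk hk'
    simp only [mem_range, mem_Icc, not_and_or, not_le] at hk hk'
    obtain rfl | rfl | rfl | rfl : k = 0 ∨ k = 1 ∨ k = 2 * g + 1 ∨ k = 2 * g + 2 := by omega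
    all_goals
      push_cast
      simp only [pow_succ, pow_mul, pow_zero]
      ring
  rw [sum_residual_reindex, mul_sum, mul_sum, ← sum_sub_distrib,
    sum_subset (fun k hk => by simp only [mem_Icc] at hk; simp only [mem_range]; omega) hweight]
  refine sum_congr rfl fun k _ => ?_
  rw [← antidiagonal_coeff_identity g k]
  ring

/-- rational-function form of the anti-diagonal-sum lemma (Lemma 5.2 of the
paper): with `f(x) = ∏ (x − e_m) = ∑ λ_k x^k`, `N_g = C(2g+1,g)` and
`R(x) = ∑_{i=1}^{g} ∑_{k=i}^{2g+1−i} (k+1−i) λ_{k+1+i} x^{k+i−1}`, one has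
`N_g (2ff″ − f′²)/(4f) − N_g R + (f/8) ∑_S (2∑_{i∈S} 1/(x−e_i) − f′/f)²
  = (N_g/(4g+2)) ∑_{k=2}^{2g} (k(2g+2−k)/2 + ((2g+1)/4)((−1)^k − 1)) λ_k x^{k−2}`. -/
theorem residual_matrix_quadratic_form_identity
    (g : ℕ) (hg : 1 ≤ g) (e : Fin (2 * g + 2) → ℂ)
    (f : ℂ → ℂ) (hf : f = fun x => ∏ m, (x - e m))
    (lam : ℕ → ℂ)
    (hlam : ∀ x : ℂ, f x = ∑ k ∈ Finset.range (2 * g + 3), lam k * x ^ k)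
    (x : ℂ) (hx : f x ≠ 0) :
    (Nat.choose (2 * g + 1) g : ℂ) *
        (2 * f x * deriv (deriv f) x - (deriv f x) ^ 2) / (4 * f x)
      - (Nat.choose (2 * g + 1) g : ℂ) *
          (∑ i ∈ Finset.Icc 1 g, ∑ k ∈ Finset.Icc i (2 * g + 1 - i),
            ((k : ℂ) + 1 - (i : ℂ)) * lam (k + 1 + i) * x ^ (k + i - 1))
      + (f x / 8) *
          ∑ S ∈ Finset.powersetCard (g + 1) (Finset.univ : Finset (Fin (2 * g + 2))),
            (2 * ∑ i ∈ S, 1 / (x - e i) - deriv f x / f x) ^ 2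
      = ((Nat.choose (2 * g + 1) g : ℂ) / (4 * (g : ℂ) + 2)) *
          ∑ k ∈ Finset.Icc 2 (2 * g),
            ((k : ℂ) * (2 * (g : ℂ) + 2 - (k : ℂ)) / 2
              + ((2 * (g : ℂ) + 1) / 4) * ((-1 : ℂ) ^ k - 1)) * lam k * x ^ (k - 2) := by
  have hroots : ∀ m ∈ univ, x ≠ e m := fun m _ hm => hx <| by
    rw [hf]; exact prod_eq_zero (mem_univ m) (by rw [hm, sub_self])
  have hf' : deriv f x = f x * ∑ m, 1 / (x - e m) := by
    simpa [hf] using deriv_prod_sub_s4 e hroots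
  have hf'' : deriv (deriv f) x
      = f x * ((∑ m, 1 / (x - e m)) ^ 2 - ∑ m, (1 / (x - e m)) ^ 2) := by
    simpa [hf] using deriv_deriv_prod_sub e hroots
  have hf''_coeff : deriv (deriv f) x
      = ∑ k ∈ range (2 * g + 3), lam k * (k * (k - 1)) * x ^ (k - 2) := by
    rw [funext hlam]; exact deriv_deriv_sum_pow lam _ x
  have hlog : deriv f x / f x = ∑ m, 1 / (x - e m) := by rw [hf', mul_div_cancel_left₀ _ hx]
  have h2g1 : (2 * g + 1 : ℂ) ≠ 0 := by exact_mod_cast (by omega : 2 * g + 1 ≠ 0)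
  have h4g2 : (4 * g + 2 : ℂ) ≠ 0 := by exact_mod_cast (by omega : 4 * g + 2 ≠ 0)
  have hsubsets := (eq_div_iff h2g1).mpr <| (mul_comm _ _).trans <|
    mul_sum_powersetCard_two_mul_sum_sub_sum_sq hg (Fintype.card_fin _) fun m => 1 / (x - e m)
  rw [hlog, hsubsets, ← antidiagonal_sum_identity g lam x, ← hf''_coeff, hf'', hf']
  field_simp
  ring
end

section
/- Let g ≥ 1, let e_1, …, e_{2g+2} ∈ ℂ, let f(x) = ∏_{m=1}^{2g+2}(x − e_m) = ∑_{k=0}^{2g+2} λ_k x^k, and let F(x,z) be the Kleinian 2-polar of f. Then for every (g+1)-element subset S of {1,…,2g+2} there exists a unique symmetric g×g complex matrix Λ such that P_S(x) P_{S^c}(z) + P_S(z) P_{S^c}(x) − F(x,z) = (x−z)² · ∑_{i,j=1}^{g} Λ_{ij} x^{i−1} z^{j−1} holds identically in x and z. In particular the symmetric polynomial P_S(x)P_{S^c}(z) + P_S(z)P_{S^c}(x) − F(x,z) is divisible by (x−z)² and the quotient has degree at most g−1 in each variable. -/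
open Finset Polynomial

noncomputable section PartitionAux

abbrev Rz := Polynomial ℂ
abbrev A2 := Polynomial Rz

/-- coefficient map for the swap: sends `z ↦ x`. -/
def ψA : Rz →+* A2 := eval₂RingHom ((C : Rz →+* A2).comp (C : ℂ →+* Rz)) X

/-- the involution swapping the two variables of `ℂ[z][x]`. -/
def swapA : A2 →+* A2 := eval₂RingHom ψA (C X)

lemma ψA_apply (r : Rz) : ψA r = r.map (C : ℂ →+* Rz) := rfl

lemma swapA_CC (a : ℂ) : swapA (C (C a)) = C (C a) := by simp [swapA, ψA]
lemma swapA_X : swapA (X : A2) = C X := by simp [swapA]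
lemma swapA_C (r : Rz) : swapA (C r) = r.map (C : ℂ →+* Rz) := by
  simp [swapA, ψA_apply]

lemma swapA_CX : swapA (C (X : Rz)) = X := by simp [swapA_C]

lemma swapA_map (p : Polynomial ℂ) : swapA (p.map (C : ℂ →+* Rz)) = C p := by
  have h1 : p.map (C : ℂ →+* Rz) = eval₂ ((C : Rz →+* A2).comp (C : ℂ →+* Rz)) X p := rfl
  rw [h1, hom_eval₂, swapA_X]
  have h2 : swapA.comp ((C : Rz →+* A2).comp (C : ℂ →+* Rz))
      = (C : Rz →+* A2).comp (C : ℂ →+* Rz) :=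
    RingHom.ext fun a => by simp [RingHom.comp_apply, swapA_CC]
  rw [h2, ← hom_eval₂, eval₂_C_X]

lemma swapA_monomial (n m : ℕ) (a : ℂ) :
    swapA (monomial n (monomial m a)) = monomial m (monomial n a) := by
  have l1 : (monomial n (monomial m a) : A2) = C (monomial m a) * X ^ n :=
    (C_mul_X_pow_eq_monomial).symm
  have l2 : (monomial m (monomial n a) : A2) = C (monomial n a) * X ^ m :=
    (C_mul_X_pow_eq_monomial).symm
  rw [l1, l2, map_mul, map_pow, swapA_X, swapA_C, map_monomial,
    ← C_mul_X_pow_eq_monomial, ← C_mul_X_pow_eq_monomial, map_mul, map_pow]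
  ring

lemma swapA_coeff (p : A2) (i j : ℕ) :
    ((swapA p).coeff i).coeff j = (p.coeff j).coeff i := by
  induction p using Polynomial.induction_on' with
  | add p q hp hq => simp [hp, hq]
  | monomial n r =>
    induction r using Polynomial.induction_on' with
    | add r s hr hs =>
      have : (monomial n) (r + s) = monomial n r + monomial n s := by simp
      simp only [this, map_add, coeff_add] at *
      simp [hr, hs]
    | monomial m a =>
      rw [swapA_monomial]
      simp only [coeff_monomial, apply_ite (fun r : Rz => r.coeff j),
        apply_ite (fun r : Rz => r.coeff i), coeff_zero]
      split_ifs <;> rfl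

/-- diagonal evaluation `x := z`. -/
def dgA : A2 →+* Rz := evalRingHom X

lemma dgA_apply (p : A2) : dgA p = p.eval X := rfl

lemma dgA_C (r : Rz) : dgA (C r) = r := eval_C

lemma dgA_X : dgA (X : A2) = (X : Rz) := eval_X

lemma dgA_comp_swapA : dgA.comp swapA = dgA := by
  apply Polynomial.ringHom_ext
  · intro r
    show dgA (swapA (C r)) = dgA (C r)
    rw [swapA_C]
    show (r.map (C : ℂ →+* Rz)).eval X = (C r).eval X
    rw [eval_map, eval₂_C_X, eval_C]
  · show dgA (swapA X) = dgA X
    rw [swapA_X]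
    show (C (X : Rz)).eval X = (X : A2).eval X
    simp

lemma dgA_swapA (p : A2) : dgA (swapA p) = dgA p := congr($(dgA_comp_swapA) p)

lemma dgA_map (p : Polynomial ℂ) : dgA (p.map (C : ℂ →+* Rz)) = p := by
  show (p.map (C : ℂ →+* Rz)).eval X = p
  rw [eval_map, eval₂_C_X]

/-- evaluation of a bivariate polynomial: outer variable `↦ x`, inner variable `↦ z`. -/
def evv (x z : ℂ) : A2 →+* ℂ := (evalRingHom x).comp (mapRingHom (evalRingHom z))

lemma evv_X (x z : ℂ) : evv x z X = x := by simp [evv]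
lemma evv_C (x z : ℂ) (r : Rz) : evv x z (C r) = r.eval z := by simp [evv]
lemma evv_CX (x z : ℂ) : evv x z (C (X : Rz)) = z := by simp [evv_C]
lemma evv_CC (x z : ℂ) (a : ℂ) : evv x z (C (C a)) = a := by simp [evv_C]
lemma evv_map (x z : ℂ) (p : Polynomial ℂ) :
    evv x z (p.map (C : ℂ →+* Rz)) = p.eval x := by
  have h0 : (evalRingHom z).comp (C : ℂ →+* Rz) = RingHom.id ℂ := RingHom.ext fun a => by simp
  simp only [evv, RingHom.comp_apply, coe_mapRingHom]
  rw [Polynomial.map_map, h0, Polynomial.map_id]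
  rfl

lemma evv_apply (x z : ℂ) (p : A2) : evv x z p = (p.map (evalRingHom z)).eval x := rfl

lemma sum_range_two_mul {M : Type*} [AddCommMonoid M] (n : ℕ) (a : ℕ → M) :
    ∑ m ∈ Finset.range (2 * n), a m = ∑ k ∈ Finset.range n, (a (2 * k) + a (2 * k + 1)) := by
  induction n with
  | zero => simp
  | succ n ih =>
    rw [show 2 * (n + 1) = 2 * n + 1 + 1 by ring, Finset.sum_range_succ, Finset.sum_range_succ,
      ih, Finset.sum_range_succ]
    abel

lemma fin_coeff_zero {g : ℕ} (c : Fin g → ℂ)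
    (h : {x : ℂ | ∑ i, c i * x ^ (i : ℕ) = 0}.Infinite) (i : Fin g) : c i = 0 := by
  set P : Polynomial ℂ := ∑ i : Fin g, Polynomial.C (c i) * Polynomial.X ^ (i : ℕ) with hP
  have hroot : {x : ℂ | P.IsRoot x}.Infinite := by
    apply h.mono
    intro x hx
    simp only [Set.mem_setOf_eq] at hx ⊢
    simp [P, IsRoot, eval_finset_sum, hx]
  have hP0 : P = 0 := P.eq_zero_of_infinite_isRoot hroot
  have := congr(Polynomial.coeff $hP0 (i : ℕ))
  rw [hP] at this
  simpa [finset_sum_coeff, coeff_C_mul, coeff_X_pow, Fin.val_eq_val] using this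

end PartitionAux

theorem partition_matrix_exists_unique
    (g : ℕ) (hg : 1 ≤ g) (e : Fin (2 * g + 2) → ℂ)
    (lam : ℕ → ℂ)
    (hlam : ∀ x : ℂ, ∏ m, (x - e m) = ∑ k ∈ Finset.range (2 * g + 3), lam k * x ^ k)
    (F : ℂ → ℂ → ℂ)
    (hF : ∀ x z : ℂ, F x z = 2 * lam (2 * g + 2) * x ^ (g + 1) * z ^ (g + 1)
        + ∑ k ∈ Finset.range (g + 1),
            x ^ k * z ^ k * (2 * lam (2 * k) + (x + z) * lam (2 * k + 1)))
    (S : Finset (Fin (2 * g + 2))) (hS : S.card = g + 1) :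
    ∃! Λ : Matrix (Fin g) (Fin g) ℂ, Λ.IsSymm ∧
      ∀ x z : ℂ,
        (∏ i ∈ S, (x - e i)) * (∏ j ∈ Sᶜ, (z - e j))
          + (∏ i ∈ S, (z - e i)) * (∏ j ∈ Sᶜ, (x - e j)) - F x z
        = (x - z) ^ 2 * ∑ i, ∑ j, Λ i j * x ^ (i : ℕ) * z ^ (j : ℕ) := by
  classical
  -- basic one-variable polynomials
  set fpol : Rz := ∏ m, (X - C (e m)) with hfpol_def
  set pS : Rz := ∏ i ∈ S, (X - C (e i)) with hpS_def
  set pC : Rz := ∏ i ∈ Sᶜ, (X - C (e i)) with hpC_def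
  have hfpol : fpol = ∑ k ∈ Finset.range (2 * g + 3), C (lam k) * X ^ k := by
    apply Polynomial.funext
    intro w
    rw [hfpol_def]
    simp only [eval_prod, eval_finset_sum, eval_sub, eval_X, eval_C, eval_mul, eval_pow]
    exact hlam w
  have hps : pS * pC = fpol := Finset.prod_mul_prod_compl S _
  -- the bivariate polynomials
  set Fp : A2 := 2 * C (C (lam (2 * g + 2))) * X ^ (g + 1) * (C (X : Rz)) ^ (g + 1)
      + ∑ k ∈ Finset.range (g + 1), (X : A2) ^ k * (C (X : Rz)) ^ k *
          (2 * C (C (lam (2 * k))) + ((X : A2) + C (X : Rz)) * C (C (lam (2 * k + 1))))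
    with hFp_def
  set G : A2 := pS.map (C : ℂ →+* Rz) * C pC + pC.map (C : ℂ →+* Rz) * C pS - Fp with hG_def
  -- diagonal vanishing
  have dgFp : dgA Fp = 2 * fpol := by
    have expand : (2 : Rz) * ∑ k ∈ Finset.range (2 * g + 3), C (lam k) * X ^ k
        = (∑ k ∈ Finset.range (g + 1),
            (2 * (C (lam (2 * k)) * X ^ (2 * k)) + 2 * (C (lam (2 * k + 1)) * X ^ (2 * k + 1))))
          + 2 * (C (lam (2 * g + 2)) * X ^ (2 * g + 2)) := by
      rw [show 2 * g + 3 = 2 * (g + 1) + 1 by ring, Finset.sum_range_succ, mul_add,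
        Finset.mul_sum, sum_range_two_mul, show 2 * (g + 1) = 2 * g + 2 by ring]
    rw [hFp_def, hfpol]
    simp only [map_add, map_mul, map_pow, map_sum, map_ofNat, dgA_C, dgA_X]
    rw [expand]
    have key : ∀ k ∈ Finset.range (g + 1),
        (X : Rz) ^ k * X ^ k * (2 * C (lam (2 * k)) + (X + X) * C (lam (2 * k + 1)))
        = 2 * (C (lam (2 * k)) * X ^ (2 * k)) + 2 * (C (lam (2 * k + 1)) * X ^ (2 * k + 1)) := by
      intro k _
      ring
    rw [Finset.sum_congr rfl key]
    ring
  have hdgG : dgA G = 0 := by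
    rw [hG_def]
    simp only [map_sub, map_add, map_mul, dgA_map, dgA_C, dgFp]
    linear_combination (2 : Rz) * hps
  -- symmetry of G under the swap
  have swFp : swapA Fp = Fp := by
    rw [hFp_def]
    simp only [map_add, map_mul, map_pow, map_sum, map_ofNat, swapA_X, swapA_CX, swapA_CC]
    have key : ∀ k ∈ Finset.range (g + 1),
        (C (X : Rz) : A2) ^ k * X ^ k *
            (2 * C (C (lam (2 * k))) + (C (X : Rz) + X) * C (C (lam (2 * k + 1))))
        = (X : A2) ^ k * (C (X : Rz)) ^ k *
            (2 * C (C (lam (2 * k))) + ((X : A2) + C (X : Rz)) * C (C (lam (2 * k + 1)))) := by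
      intro k _
      ring
    rw [Finset.sum_congr rfl key]
    ring
  have swG : swapA G = G := by
    rw [hG_def]
    simp only [map_sub, map_add, map_mul, swapA_map, swapA_C, swFp]
    ring
  -- divide out (X - C Z) twice
  have hne : ((X : A2) - C (X : Rz)) ≠ 0 := X_sub_C_ne_zero _
  set G1 : A2 := G /ₘ ((X : A2) - C (X : Rz)) with hG1_def
  have hG1 : ((X : A2) - C (X : Rz)) * G1 = G :=
    mul_divByMonic_eq_iff_isRoot.mpr (show G.eval (X : Rz) = 0 from hdgG)
  have swX : swapA ((X : A2) - C (X : Rz)) = -((X : A2) - C (X : Rz)) := by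
    rw [map_sub, swapA_X, swapA_CX]; ring
  have swG1 : swapA G1 = -G1 := by
    have h := congrArg swapA hG1
    rw [map_mul, swX, swG, ← hG1] at h
    have h2 : ((X : A2) - C (X : Rz)) * (-(swapA G1)) = ((X : A2) - C (X : Rz)) * G1 := by
      linear_combination h
    have h3 := mul_left_cancel₀ hne h2
    linear_combination -h3
  have dgG1 : dgA G1 = 0 := by
    have h := dgA_swapA G1
    rw [swG1, map_neg] at h
    have h2 : (2 : Rz) * dgA G1 = 0 := by linear_combination - h
    rcases mul_eq_zero.mp h2 with h3 | h3
    · exact absurd h3 two_ne_zero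
    · exact h3
  set Q : A2 := G1 /ₘ ((X : A2) - C (X : Rz)) with hQ_def
  have hQ1 : ((X : A2) - C (X : Rz)) * Q = G1 :=
    mul_divByMonic_eq_iff_isRoot.mpr (show G1.eval (X : Rz) = 0 from dgG1)
  have hGQ : G = ((X : A2) - C (X : Rz)) ^ 2 * Q := by
    rw [← hG1, ← hQ1]; ring
  have swQ : swapA Q = Q := by
    have h := congrArg swapA hQ1
    rw [map_mul, swX, swG1] at h
    have h2 : ((X : A2) - C (X : Rz)) * swapA Q = ((X : A2) - C (X : Rz)) * Q := by
      linear_combination - h - hQ1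
    exact mul_left_cancel₀ hne h2
  -- degree bounds
  have hpSdeg : pS.natDegree ≤ g + 1 := by
    rw [hpS_def]
    refine (natDegree_prod_le _ _).trans ?_
    calc (∑ i ∈ S, (X - C (e i)).natDegree) = ∑ i ∈ S, 1 := by
          exact Finset.sum_congr rfl fun i _ => natDegree_X_sub_C _
      _ = S.card := by simp
      _ ≤ g + 1 := by rw [hS]
  have hpCdeg : pC.natDegree ≤ g + 1 := by
    rw [hpC_def]
    refine (natDegree_prod_le _ _).trans ?_
    calc (∑ i ∈ Sᶜ, (X - C (e i)).natDegree) = ∑ i ∈ Sᶜ, 1 := by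
          exact Finset.sum_congr rfl fun i _ => natDegree_X_sub_C _
      _ = Sᶜ.card := by simp
      _ ≤ g + 1 := by
          rw [Finset.card_compl, hS]
          simp
          omega
  have hFpdeg : Fp.natDegree ≤ g + 1 := by
    rw [hFp_def]
    apply natDegree_add_le_of_degree_le
    · have h1 : ((2 : A2) * C (C (lam (2 * g + 2)))).natDegree ≤ 0 := by
        have := natDegree_mul_le_of_le (m := 0) (n := 0)
          (show ((2 : A2)).natDegree ≤ 0 by simp) (natDegree_C (C (lam (2 * g + 2)))).le
        omega
      have h2 : ((X : A2) ^ (g + 1)).natDegree ≤ g + 1 := (natDegree_X_pow _).le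
      have h3 : ((C (X : Rz) : A2) ^ (g + 1)).natDegree ≤ 0 :=
        (natDegree_pow_le_of_le _ (natDegree_C _).le).trans (by simp)
      have h4 := natDegree_mul_le_of_le (natDegree_mul_le_of_le h1 h2) h3
      omega
    · apply natDegree_sum_le_of_forall_le
      intro k hk
      have hk' : k ≤ g := by simpa [Nat.lt_succ_iff] using hk
      have h1 : ((X : A2) ^ k).natDegree ≤ k := (natDegree_X_pow _).le
      have h2 : ((C (X : Rz) : A2) ^ k).natDegree ≤ 0 :=
        (natDegree_pow_le_of_le _ (natDegree_C _).le).trans (by simp)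
      have h3 : ((2 : A2) * C (C (lam (2 * k)))).natDegree ≤ 1 := by
        have := natDegree_mul_le_of_le (m := 0) (n := 0)
          (show ((2 : A2)).natDegree ≤ 0 by simp) (natDegree_C (C (lam (2 * k)))).le
        omega
      have h4 : (((X : A2) + C (X : Rz)) * C (C (lam (2 * k + 1)))).natDegree ≤ 1 := by
        have ha : ((X : A2) + C (X : Rz)).natDegree ≤ 1 :=
          natDegree_add_le_of_degree_le natDegree_X_le ((natDegree_C _).le.trans (by omega))
        have := natDegree_mul_le_of_le (n := 0) ha (natDegree_C (C (lam (2 * k + 1)))).le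
        omega
      have h5 := natDegree_mul_le_of_le (natDegree_mul_le_of_le h1 h2)
        (natDegree_add_le_of_degree_le h3 h4)
      omega
  have hGdeg : G.natDegree ≤ g + 1 := by
    rw [hG_def]
    have t1 : (pS.map (C : ℂ →+* Rz) * C pC).natDegree ≤ g + 1 := by
      have := natDegree_mul_le_of_le (n := 0)
        ((natDegree_map_le (f := (C : ℂ →+* Rz)) (p := pS)).trans hpSdeg) (natDegree_C pC).le
      omega
    have t2 : (pC.map (C : ℂ →+* Rz) * C pS).natDegree ≤ g + 1 := by
      have := natDegree_mul_le_of_le (n := 0)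
        ((natDegree_map_le (f := (C : ℂ →+* Rz)) (p := pC)).trans hpCdeg) (natDegree_C pS).le
      omega
    have := natDegree_sub_le_of_le (natDegree_add_le_of_degree_le t1 t2) hFpdeg
    simpa using this
  have hQdeg : Q.natDegree < g := by
    rcases eq_or_ne Q 0 with h | h
    · rw [h, natDegree_zero]; omega
    · have hfac : (((X : A2) - C (X : Rz)) ^ 2) ≠ 0 := pow_ne_zero _ hne
      have hnd : G.natDegree = 2 + Q.natDegree := by
        rw [hGQ, natDegree_mul hfac h, natDegree_pow, natDegree_X_sub_C]
      omega
  have hQcoeff0 : ∀ i j : ℕ, g ≤ j → (Q.coeff i).coeff j = 0 := by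
    intro i j hj
    have h1 : (Q.coeff i).coeff j = (Q.coeff j).coeff i := by
      conv_lhs => rw [← swQ]
      exact swapA_coeff Q i j
    rw [h1, coeff_eq_zero_of_natDegree_lt (lt_of_lt_of_le hQdeg hj), coeff_zero]
  have hQcdeg : ∀ i : ℕ, (Q.coeff i).natDegree < g := by
    intro i
    rcases eq_or_ne (Q.coeff i) 0 with h | h
    · rw [h, natDegree_zero]; omega
    · exact (natDegree_lt_iff_degree_lt h).mpr
        ((degree_lt_iff_coeff_zero _ _).mpr fun m hm => hQcoeff0 i m hm)
  -- the matrix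
  set Λ : Matrix (Fin g) (Fin g) ℂ :=
    Matrix.of (fun i j : Fin g => (Q.coeff (i : ℕ)).coeff (j : ℕ)) with hΛ_def
  have hΛsymm : Λ.IsSymm := by
    apply Matrix.IsSymm.ext
    intro i j
    show (Q.coeff (j : ℕ)).coeff (i : ℕ) = (Q.coeff (i : ℕ)).coeff (j : ℕ)
    conv_rhs => rw [← swQ]
    exact (swapA_coeff Q (i : ℕ) (j : ℕ)).symm
  -- the evaluation identity
  have hid : ∀ x z : ℂ,
      (∏ i ∈ S, (x - e i)) * (∏ j ∈ Sᶜ, (z - e j))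
        + (∏ i ∈ S, (z - e i)) * (∏ j ∈ Sᶜ, (x - e j)) - F x z
      = (x - z) ^ 2 * ∑ i, ∑ j, Λ i j * x ^ (i : ℕ) * z ^ (j : ℕ) := by
    intro x z
    have hevalS : ∀ w : ℂ, pS.eval w = ∏ i ∈ S, (w - e i) := by
      intro w; rw [hpS_def]; simp [eval_prod]
    have hevalC : ∀ w : ℂ, pC.eval w = ∏ i ∈ Sᶜ, (w - e i) := by
      intro w; rw [hpC_def]; simp [eval_prod]
    have hevFp : evv x z Fp = F x z := by
      rw [hFp_def, hF x z]
      simp only [map_add, map_mul, map_pow, map_sum, map_ofNat, evv_X, evv_CX, evv_CC]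
    have hevG : evv x z G
        = (∏ i ∈ S, (x - e i)) * (∏ j ∈ Sᶜ, (z - e j))
          + (∏ i ∈ S, (z - e i)) * (∏ j ∈ Sᶜ, (x - e j)) - F x z := by
      rw [hG_def]
      simp only [map_sub, map_add, map_mul, evv_map, evv_C, hevFp, hevalS, hevalC]
      ring
    have hevQ : evv x z Q
        = ∑ i ∈ Finset.range g, (∑ j ∈ Finset.range g, (Q.coeff i).coeff j * z ^ j) * x ^ i := by
      rw [evv_apply]
      have hdeg2 : (Q.map (evalRingHom z)).natDegree < g := natDegree_map_le.trans_lt hQdeg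
      rw [eval_eq_sum_range' hdeg2]
      refine Finset.sum_congr rfl fun i _ => ?_
      rw [coeff_map]
      have : (evalRingHom z) (Q.coeff i) = (Q.coeff i).eval z := rfl
      rw [this, eval_eq_sum_range' (hQcdeg i)]
    have hrhs : (∑ i, ∑ j, Λ i j * x ^ (i : ℕ) * z ^ (j : ℕ))
        = ∑ i ∈ Finset.range g, (∑ j ∈ Finset.range g, (Q.coeff i).coeff j * z ^ j) * x ^ i := by
      rw [← Fin.sum_univ_eq_sum_range (fun i =>
        (∑ j ∈ Finset.range g, (Q.coeff i).coeff j * z ^ j) * x ^ i) g]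
      refine Finset.sum_congr rfl fun i _ => ?_
      rw [← Fin.sum_univ_eq_sum_range (fun j => (Q.coeff (i : ℕ)).coeff j * z ^ j) g]
      rw [Finset.sum_mul]
      refine Finset.sum_congr rfl fun j _ => ?_
      show Λ i j * x ^ (i : ℕ) * z ^ (j : ℕ) = _
      rw [hΛ_def]
      simp only [Matrix.of_apply]
      ring
    have := congrArg (evv x z) hGQ
    rw [hevG, map_mul, map_pow, map_sub, evv_X, evv_C, eval_X, hevQ] at this
    rw [this, hrhs]
  refine ⟨Λ, ⟨hΛsymm, hid⟩, ?_⟩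
  -- uniqueness
  rintro Λ' ⟨hsym', hid'⟩
  have key : ∀ (z : ℂ) (i : Fin g), ∑ j, (Λ' i j - Λ i j) * z ^ (j : ℕ) = 0 := by
    intro z i
    apply fin_coeff_zero (fun i => ∑ j, (Λ' i j - Λ i j) * z ^ (j : ℕ))
    apply Set.Infinite.mono _ ((Set.finite_singleton z).infinite_compl)
    intro x hx
    have hx' : x ≠ z := by simpa using hx
    have h1 := hid' x z
    have h2 := hid x z
    have h3 : (x - z) ^ 2 * (∑ i, ∑ j, Λ' i j * x ^ (i : ℕ) * z ^ (j : ℕ))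
        = (x - z) ^ 2 * (∑ i, ∑ j, Λ i j * x ^ (i : ℕ) * z ^ (j : ℕ)) := by
      rw [← h1, ← h2]
    have h4 := mul_left_cancel₀ (pow_ne_zero 2 (sub_ne_zero.mpr hx')) h3
    show ∑ i : Fin g, (∑ j, (Λ' i j - Λ i j) * z ^ (j : ℕ)) * x ^ (i : ℕ) = 0
    have h5 : ∑ i : Fin g, (∑ j, (Λ' i j - Λ i j) * z ^ (j : ℕ)) * x ^ (i : ℕ)
        = (∑ i, ∑ j, Λ' i j * x ^ (i : ℕ) * z ^ (j : ℕ))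
          - (∑ i, ∑ j, Λ i j * x ^ (i : ℕ) * z ^ (j : ℕ)) := by
      rw [← Finset.sum_sub_distrib]
      refine Finset.sum_congr rfl fun i _ => ?_
      rw [Finset.sum_mul, ← Finset.sum_sub_distrib]
      refine Finset.sum_congr rfl fun j _ => ?_
      ring
    rw [h5, h4, sub_self]
  apply Matrix.ext
  intro i j
  have : Λ' i j - Λ i j = 0 := by
    apply fin_coeff_zero (fun j => Λ' i j - Λ i j)
    have : {z : ℂ | ∑ j, (Λ' i j - Λ i j) * z ^ (j : ℕ) = 0} = Set.univ := by
      ext z; simp [key z i]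
    rw [this]
    exact Set.infinite_univ
  exact sub_eq_zero.mp this
end
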